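/- Suppose Φ: D → ℂ is a function on the period domain D (weight 3, all Hodge numbers 1) such that (i) Φ is constant on exp(zN′)·K·F₀ for every z with |z| < 1, and (ii) lim_{x→∞} Φ(exp(ixN)F₀) = 0. Then Φ(F_∞) = 0. In particular, if additionally Φ(F) ≠ 0 for all F ∈ D, no such Φ exists. -/

import Mathlib

open Matrix Complex NormedSpace Filter

noncomputable section

/-- Symplectic form with Gram matrix `((0, iI), (-iI, 0))` in the basis `u₁,…,u₄`
(the standard basis of `ℂ⁴`). -/
def Bu (x y : Fin 4 → ℂ) : ℂ :=
  Complex.I * (x 0 * y 2) + Complex.I * (x 1 * y 3)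
    - Complex.I * (x 2 * y 0) - Complex.I * (x 3 * y 1)

/-- Conjugation with `conj u₁ = u₃`, `conj u₂ = u₄`, `conj u₃ = u₁`, `conj u₄ = u₂`. -/
def cjU (x : Fin 4 → ℂ) : Fin 4 → ℂ := fun i => starRingEnd ℂ (x (i + 2))

/-- The period domain `D` of weight-3 polarized Hodge structures with all `h^{p,q} = 1`
(see Statement 7 for the sign conventions coming from the Weil operator). -/
def Dflag : Set (Submodule ℂ (Fin 4 → ℂ) × Submodule ℂ (Fin 4 → ℂ)) :=
  {F | F.1 ≤ F.2 ∧ Module.finrank ℂ F.1 = 1 ∧ Module.finrank ℂ F.2 = 2 ∧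
    (∀ x ∈ F.2, ∀ y ∈ F.2, Bu x y = 0) ∧
    (∀ v ∈ F.1, v ≠ 0 → 0 < (-Complex.I * Bu v (cjU v)).re) ∧
    (∀ v ∈ F.2, (∀ w ∈ F.1, Bu v (cjU w) = 0) → v ≠ 0 →
      0 < (Complex.I * Bu v (cjU v)).re)}

/-- `G = Sp(4, ℝ)` inside `GL₄(ℂ)` via the basis `u₁,…,u₄`. -/
def Gsp : Set (Matrix (Fin 4) (Fin 4) ℂ) :=
  {g | (∀ x y, Bu (g.mulVec x) (g.mulVec y) = Bu x y) ∧
       (∀ x, g.mulVec (cjU x) = cjU (g.mulVec x))}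

/-- The Weil operator of `F₀`: `diag(-i, -i, i, i)` in the basis `u₁,…,u₄`. -/
def CF0 : Matrix (Fin 4) (Fin 4) ℂ :=
  Matrix.diagonal ![-Complex.I, -Complex.I, Complex.I, Complex.I]

/-- The maximal compact subgroup `K` at `F₀`. -/
def Ksub : Set (Matrix (Fin 4) (Fin 4) ℂ) :=
  {g ∈ Gsp | ∀ v w, Bu (CF0.mulVec (g.mulVec v)) (cjU (g.mulVec w)) =
    Bu (CF0.mulVec v) (cjU w)}

/-- The base flag `F₀`: `F₀³ = span(u₂)`, `F₀² = span(u₂, u₃)`. -/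
def F0 : Submodule ℂ (Fin 4 → ℂ) × Submodule ℂ (Fin 4 → ℂ) :=
  (Submodule.span ℂ {![0, 1, 0, 0]}, Submodule.span ℂ {![0, 1, 0, 0], ![0, 0, 1, 0]})

/-- The flag `F_∞`: `F_∞³ = span(u₁)`, `F_∞² = span(u₁, u₄)`. -/
def Finfty : Submodule ℂ (Fin 4 → ℂ) × Submodule ℂ (Fin 4 → ℂ) :=
  (Submodule.span ℂ {![1, 0, 0, 0]}, Submodule.span ℂ {![1, 0, 0, 0], ![0, 0, 0, 1]})

/-- `g` acts on a flag by applying the linear map to each subspace. -/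
def mapFlag (g : Matrix (Fin 4) (Fin 4) ℂ)
    (F : Submodule ℂ (Fin 4 → ℂ) × Submodule ℂ (Fin 4 → ℂ)) :
    Submodule ℂ (Fin 4 → ℂ) × Submodule ℂ (Fin 4 → ℂ) :=
  (F.1.map g.mulVecLin, F.2.map g.mulVecLin)

/-! Both `N` and `N'` square to zero, so their exponentials are `1 + zN` and `1 + zN'`. For real
`x ≥ 0` this gives `exp(ixN)F₀ = exp(zN')F₀` with `z = x/(2+x) ∈ [0,1)`, while the swap
`k = (u₁ u₂)(u₃ u₄) ∈ K` moves `F₀` to `F_∞`, which `exp(zN')` fixes. Hence by (i)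
`Φ(exp(ixN)F₀) = Φ(exp(zN')kF₀) = Φ(F_∞)` for all `x ≥ 0`, and (ii) forces `Φ(F_∞) = 0`;
finally `F_∞ ∈ D`. -/

theorem NormedSpace.exp_eq_one_add_of_mul_self_eq_zero {𝔸 : Type*} [Ring 𝔸] [Algebra ℚ 𝔸]
    [TopologicalSpace 𝔸] [IsTopologicalRing 𝔸] {a : 𝔸} (ha : a * a = 0) : exp a = 1 + a := by
  have hpow : ∀ n, 2 ≤ n → a ^ n = 0 := fun n hn => by
    obtain ⟨k, rfl⟩ := Nat.exists_eq_add_of_le hn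
    rw [pow_add, sq, ha, zero_mul]
  rw [exp_eq_tsum ℚ]
  dsimp only
  rw [tsum_eq_sum (s := Finset.range 2) fun n hn => by
    rw [hpow n (not_lt.mp (Finset.mem_range.not.mp hn)), smul_zero]]
  simp [Finset.sum_range_succ]

theorem Matrix.ext_on_range {n R ι : Type*} [Fintype n] [DecidableEq n] [CommSemiring R]
    {v : ι → n → R} (hv : Submodule.span R (Set.range v) = ⊤) {A B : Matrix n n R}
    (h : ∀ i, A *ᵥ v i = B *ᵥ v i) : A = B :=
  Matrix.toLin'.injective (LinearMap.ext_on_range hv h)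

theorem Submodule.span_pair_smul_right {R M : Type*} [CommSemiring R] [AddCommMonoid M] [Module R M]
    (a b : M) {c : R} (hc : IsUnit c) : span R {a, c • b} = span R {a, b} := by
  rw [span_insert, span_insert, span_singleton_smul_eq hc]

theorem mapFlag_mul (A B : Matrix (Fin 4) (Fin 4) ℂ) (F) :
    mapFlag (A * B) F = mapFlag A (mapFlag B F) := by
  simp [mapFlag, Matrix.mulVecLin_mul, Submodule.map_comp]

theorem mapFlag_span (M : Matrix (Fin 4) (Fin 4) ℂ) (a b : Fin 4 → ℂ) :
    mapFlag M (Submodule.span ℂ {a}, Submodule.span ℂ {a, b}) =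
      (Submodule.span ℂ {M *ᵥ a}, Submodule.span ℂ {M *ᵥ a, M *ᵥ b}) := by
  simp [mapFlag, Submodule.map_span, Set.image_insert_eq]

def nilN : Matrix (Fin 4) (Fin 4) ℂ :=
  !![I / 2, 0, -I / 2, 0; 0, 0, 0, 0; I / 2, 0, -I / 2, 0; 0, 0, 0, 0]

def nilN' : Matrix (Fin 4) (Fin 4) ℂ :=
  !![0, 0, 1, 0; 0, 0, 0, 0; 0, 0, 0, 0; 0, 0, 0, 0]

def kSwap : Matrix (Fin 4) (Fin 4) ℂ :=
  !![0, 1, 0, 0; 1, 0, 0, 0; 0, 0, 0, 1; 0, 0, 1, 0]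

theorem nilN_mulVec (v : Fin 4 → ℂ) :
    nilN *ᵥ v = ![I / 2 * (v 0 - v 2), 0, I / 2 * (v 0 - v 2), 0] := by
  ext i; fin_cases i <;> simp [nilN, Matrix.mulVec, dotProduct, Fin.sum_univ_four] <;> ring

theorem nilN'_mulVec (v : Fin 4 → ℂ) : nilN' *ᵥ v = ![v 2, 0, 0, 0] := by
  ext i; fin_cases i <;> simp [nilN', Matrix.mulVec, dotProduct, Fin.sum_univ_four]

theorem kSwap_mulVec (v : Fin 4 → ℂ) : kSwap *ᵥ v = ![v 1, v 0, v 3, v 2] := by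
  ext i; fin_cases i <;> simp [kSwap, Matrix.mulVec, dotProduct, Fin.sum_univ_four]

-- The real symplectic basis `e₁,…,e₄` in `u`-coordinates.
def eBasis : Fin 4 → Fin 4 → ℂ :=
  (Real.sqrt 2 : ℂ)⁻¹ • ![![1, 0, 1, 0], ![0, 1, 0, 1], ![-I, 0, I, 0], ![0, -I, 0, I]]

theorem span_range_eBasis : Submodule.span ℂ (Set.range eBasis) = ⊤ := by
  refine Submodule.eq_top_iff'.2 fun v => (Submodule.mem_span_range_iff_exists_fun ℂ).2 ?_
  -- the `e`-coordinates of `v`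
  refine ⟨(Real.sqrt 2 : ℂ)⁻¹ • ![v 0 + v 2, v 1 + v 3, I * (v 0 - v 2), I * (v 1 - v 3)],
    ?_⟩
  have hs : (Real.sqrt 2 : ℂ) ^ 2 = 2 := by norm_cast; simp
  have hs0 : (Real.sqrt 2 : ℂ) ≠ 0 := by norm_cast; positivity
  ext i
  fin_cases i <;> simp [eBasis, Fin.sum_univ_four] <;> field_simp <;> rw [hs, I_sq] <;> ring

theorem eq_nilN {N : Matrix (Fin 4) (Fin 4) ℂ} (hN3 : N *ᵥ eBasis 2 = eBasis 0)
    (hNj : ∀ j : Fin 4, j ≠ 2 → N *ᵥ eBasis j = 0) : N = nilN := by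
  refine Matrix.ext_on_range span_range_eBasis fun j => ?_
  by_cases hj : j = 2
  · subst hj
    rw [hN3, eBasis, Pi.smul_apply, Pi.smul_apply, mulVec_smul, nilN_mulVec]
    congr 1; ext i; fin_cases i <;> simp <;> ring_nf <;> simp
  · rw [hNj j hj, eBasis, Pi.smul_apply, mulVec_smul, nilN_mulVec]
    ext i; fin_cases j <;> fin_cases i <;> simp at hj ⊢

theorem eq_nilN' {N' : Matrix (Fin 4) (Fin 4) ℂ} (hN'3 : N' *ᵥ Pi.single 2 1 = Pi.single 0 1)
    (hN'j : ∀ j : Fin 4, j ≠ 2 → N' *ᵥ Pi.single j 1 = 0) : N' = nilN' := by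
  refine Matrix.ext_of_mulVec_single fun j => ?_
  rw [nilN'_mulVec]
  by_cases hj : j = 2
  · subst hj
    rw [hN'3]
    ext i; fin_cases i <;> simp
  · rw [hN'j j hj]
    ext i; fin_cases i <;> simp [Ne.symm hj]

theorem nilN_mul_self : nilN * nilN = 0 := by
  refine Matrix.ext_of_mulVec_single fun j => ?_
  rw [← Matrix.mulVec_mulVec, nilN_mulVec, nilN_mulVec]
  ext i; fin_cases i <;> simp

theorem nilN'_mul_self : nilN' * nilN' = 0 := by
  refine Matrix.ext_of_mulVec_single fun j => ?_
  rw [← Matrix.mulVec_mulVec, nilN'_mulVec, nilN'_mulVec]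
  ext i; fin_cases i <;> simp

theorem exp_smul_nilN (z : ℂ) : exp (z • nilN) = 1 + z • nilN :=
  exp_eq_one_add_of_mul_self_eq_zero (by rw [smul_mul_smul_comm, nilN_mul_self, smul_zero])

theorem exp_smul_nilN' (z : ℂ) : exp (z • nilN') = 1 + z • nilN' :=
  exp_eq_one_add_of_mul_self_eq_zero (by rw [smul_mul_smul_comm, nilN'_mul_self, smul_zero])

theorem mapFlag_exp_I_smul_nilN_F0 {x : ℂ} (hx : 2 + x ≠ 0) :
    mapFlag (exp ((I * x) • nilN)) F0 = mapFlag (exp ((x / (2 + x)) • nilN')) F0 := by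
  have hu3 : exp ((I * x) • nilN) *ᵥ ![0, 0, 1, 0] =
      ((2 + x) / 2) • (exp ((x / (2 + x)) • nilN') *ᵥ ![0, 0, 1, 0]) := by
    simp only [exp_smul_nilN, exp_smul_nilN', add_mulVec, one_mulVec, smul_mulVec, nilN_mulVec,
      nilN'_mulVec]
    ext i; fin_cases i <;> simp <;> field_simp <;> ring_nf <;> simp [I_sq]
  have hc : IsUnit ((2 + x) / 2) := by simpa using hx
  simp only [F0, mapFlag_span]
  rw [hu3, Submodule.span_pair_smul_right _ _ hc]
  simp [exp_smul_nilN, exp_smul_nilN', add_mulVec, smul_mulVec, nilN_mulVec, nilN'_mulVec]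

theorem mapFlag_exp_smul_nilN'_Finfty (z : ℂ) : mapFlag (exp (z • nilN')) Finfty = Finfty := by
  simp [Finfty, mapFlag_span, exp_smul_nilN', add_mulVec, smul_mulVec, nilN'_mulVec]

theorem mapFlag_kSwap_F0 : mapFlag kSwap F0 = Finfty := by
  simp [F0, Finfty, mapFlag_span, kSwap_mulVec]

theorem one_mem_Ksub : (1 : Matrix (Fin 4) (Fin 4) ℂ) ∈ Ksub := by
  simp [Ksub, Gsp]

theorem kSwap_mem_Ksub : kSwap ∈ Ksub := by
  refine ⟨⟨fun v w => ?_, fun v => ?_⟩, fun v w => ?_⟩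
  · simp [Bu, kSwap_mulVec]; ring
  · ext i; fin_cases i <;> simp [cjU, kSwap_mulVec]
  · simp [Bu, kSwap_mulVec, CF0, cjU, mulVec_diagonal]; ring

theorem I_mul_Bu_cjU_self (v : Fin 4 → ℂ) :
    I * Bu v (cjU v) = ↑(normSq (v 2) + normSq (v 3) - normSq (v 0) - normSq (v 1)) := by
  simp only [Bu, cjU, Fin.reduceAdd, mul_conj]
  push_cast
  linear_combination
    (↑(normSq (v 0)) + ↑(normSq (v 1)) - ↑(normSq (v 2)) - ↑(normSq (v 3)) : ℂ) * I_sq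

theorem mem_span_u1_u4 {v : Fin 4 → ℂ} :
    v ∈ Submodule.span ℂ {![1, 0, 0, 0], ![0, 0, 0, 1]} ↔ v = ![v 0, 0, 0, v 3] := by
  rw [Submodule.mem_span_pair]
  constructor
  · rintro ⟨a, b, rfl⟩
    ext i; fin_cases i <;> simp
  · intro hv
    refine ⟨v 0, v 3, ?_⟩
    rw [hv]; ext i; fin_cases i <;> simp

theorem Finfty_mem_Dflag : Finfty ∈ Dflag := by
  refine ⟨Submodule.span_mono (by simp), finrank_span_singleton (by simp), ?_, ?_, ?_, ?_⟩
  · rw [Finfty, ← Matrix.range_cons_cons_empty _ _ ![], finrank_span_eq_card]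
    · simp
    · rw [LinearIndependent.pair_iff]
      intro s t h
      exact ⟨by simpa using congrFun h 0, by simpa using congrFun h 3⟩
  · intro v hv w hw
    rw [Finfty, mem_span_u1_u4] at hv hw
    rw [hv, hw]
    simp [Bu]
  · intro v hv hv0
    obtain ⟨a, rfl⟩ := Submodule.mem_span_singleton.1 hv
    have ha : a ≠ 0 := by rintro rfl; simp at hv0
    rw [neg_mul, I_mul_Bu_cjU_self]
    simpa using ha
  · intro v hv horth hv0
    rw [Finfty, mem_span_u1_u4] at hv
    have h0 : v 0 = 0 := by
      simpa [Bu, cjU] using horth ![1, 0, 0, 0] (Submodule.mem_span_singleton_self _)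
    have h3 : v 3 ≠ 0 := by
      rintro h3; rw [h0, h3] at hv; exact hv0 (by rw [hv]; ext i; fin_cases i <;> rfl)
    rw [I_mul_Bu_cjU_self, hv]
    simpa [h0] using h3

/-- Let `N` correspond to `e₃ ↦ e₁` (in the real symplectic basis
`e₁,…,e₄`, expressed here in `u`-coordinates) and `N'` to `u₃ ↦ u₁`.  Suppose
`Φ` is a function on flags such that (i) `Φ` is constant on `exp(z N')·K·F₀` for every
`|z| < 1`, and (ii) `Φ(exp(i x N) F₀) → 0` as `x → ∞`.  Then `Φ(F_∞) = 0`; in particular,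
if moreover `Φ(F) ≠ 0` for every `F ∈ D`, no such `Φ` exists. -/
theorem no_nonvanishing_Phi
    (e : Fin 4 → (Fin 4 → ℂ))
    (he0 : e 0 = (Real.sqrt 2 : ℂ)⁻¹ • ![1, 0, 1, 0])
    (he1 : e 1 = (Real.sqrt 2 : ℂ)⁻¹ • ![0, 1, 0, 1])
    (he2 : e 2 = (Real.sqrt 2 : ℂ)⁻¹ • ![-Complex.I, 0, Complex.I, 0])
    (he3 : e 3 = (Real.sqrt 2 : ℂ)⁻¹ • ![0, -Complex.I, 0, Complex.I])
    (N : Matrix (Fin 4) (Fin 4) ℂ)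
    (hN3 : N.mulVec (e 2) = e 0)
    (hNj : ∀ j : Fin 4, j ≠ 2 → N.mulVec (e j) = 0)
    (N' : Matrix (Fin 4) (Fin 4) ℂ)
    (hN'3 : N'.mulVec (Pi.single 2 1) = Pi.single 0 1)
    (hN'j : ∀ j : Fin 4, j ≠ 2 → N'.mulVec (Pi.single j 1) = 0)
    (Φ : Submodule ℂ (Fin 4 → ℂ) × Submodule ℂ (Fin 4 → ℂ) → ℂ)
    (hconst : ∀ z : ℂ, ‖z‖ < 1 → ∀ g ∈ Ksub, ∀ g' ∈ Ksub,
      Φ (mapFlag (NormedSpace.exp (z • N') * g) F0) = Φ (mapFlag (NormedSpace.exp (z • N') * g') F0))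
    (hlim : Tendsto (fun x : ℝ => Φ (mapFlag (NormedSpace.exp ((Complex.I * x) • N)) F0))
      atTop (nhds 0)) :
    Φ Finfty = 0 ∧ ((∀ Fl ∈ Dflag, Φ Fl ≠ 0) → False) := by
  obtain rfl : e = eBasis := by ext1 j; fin_cases j <;> simp [eBasis, *]
  obtain rfl := eq_nilN hN3 hNj
  obtain rfl := eq_nilN' hN'3 hN'j
  have hΦ : ∀ x : ℝ, 0 ≤ x → Φ (mapFlag (exp ((I * x) • nilN)) F0) = Φ Finfty := by
    intro x hx
    have hx2 : (2 + x : ℂ) ≠ 0 := by exact_mod_cast (by positivity : (2 + x : ℝ) ≠ 0)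
    have hz : ‖(x : ℂ) / (2 + x)‖ < 1 := by
      rw [← ofReal_ofNat, ← ofReal_add, ← ofReal_div, norm_real,
        Real.norm_of_nonneg (by positivity), div_lt_one (by positivity)]
      linarith
    calc Φ (mapFlag (exp ((I * x) • nilN)) F0)
        = Φ (mapFlag (exp (((x : ℂ) / (2 + x)) • nilN') * 1) F0) := by
          rw [mul_one, mapFlag_exp_I_smul_nilN_F0 hx2]
      _ = Φ (mapFlag (exp (((x : ℂ) / (2 + x)) • nilN') * kSwap) F0) :=
          hconst _ hz _ one_mem_Ksub _ kSwap_mem_Ksub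
      _ = Φ Finfty := by rw [mapFlag_mul, mapFlag_kSwap_F0, mapFlag_exp_smul_nilN'_Finfty]
  have hΦ_Finfty : Φ Finfty = 0 :=
    tendsto_nhds_unique (tendsto_const_nhds.congr' <| (eventually_ge_atTop 0).mono
      fun x hx => (hΦ x hx).symm) hlim
  exact ⟨hΦ_Finfty, fun h => h Finfty Finfty_mem_Dflag hΦ_Finfty⟩

end
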